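/- arXiv:2210.12325 — 2 statements merged into one kernel-verified Lean document; each statement's English description precedes it below -/
import Mathlib

section
/- For every n ≥ 1, the bivariate exterior peak polynomials satisfy the convolution formula W_{n+1}(x,y) = Σ_{k=0}^{n} C(n,k)·W_k(x,y)·W_{n−k}(x,y), where C(n,k) is the binomial coefficient. -/
/-!
Inserting the letter `n + 1` into one of the `n + 1` slots of a permutation of `[n]` with `c`
exterior peaks keeps `c` peaks if the slot is adjacent to a peak (there are `2c` such slots) and
creates one new peak otherwise. Hence `W_{n+1} = D W_n` for the derivation `D x = x y`, `D y = x²`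
of `ℚ[x, y]`, so `W_n = Dⁿ y`. Since `D (x²) = 2 x² y = D (y²)`, for `n ≥ 1` we get
`W_{n+1} = Dⁿ (x²) = Dⁿ (y · y)`, and the general Leibniz rule gives the convolution.
-/

open MvPolynomial

/-- The `i`-th entry (1-indexed) of the permutation `σ` of `[n]`, with the
convention that positions `0` and `> n` carry the entry `0`. -/
def permEntry (n : ℕ) (σ : Equiv.Perm (Fin n)) (i : ℕ) : ℕ :=
  if h : 1 ≤ i ∧ i ≤ n then ((σ ⟨i - 1, by omega⟩ : Fin n) : ℕ) + 1 else 0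

/-- The number of left peaks of `σ`: indices `1 ≤ i ≤ n-1` with
`σ_{i-1} < σ_i > σ_{i+1}`, convention `σ₀ = 0`. -/
def leftPeakCount (n : ℕ) (σ : Equiv.Perm (Fin n)) : ℕ :=
  ((Finset.Icc 1 (n - 1)).filter fun i =>
    permEntry n σ (i - 1) < permEntry n σ i ∧ permEntry n σ (i + 1) < permEntry n σ i).card

/-- The number of exterior peaks of `σ`: indices `1 ≤ i ≤ n` with
`σ_{i-1} < σ_i > σ_{i+1}`, conventions `σ₀ = σ_{n+1} = 0`. -/
def extPeakCount (n : ℕ) (σ : Equiv.Perm (Fin n)) : ℕ :=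
  ((Finset.Icc 1 n).filter fun i =>
    permEntry n σ (i - 1) < permEntry n σ i ∧ permEntry n σ (i + 1) < permEntry n σ i).card

/-- The number of interior peaks of `σ`: indices `2 ≤ i ≤ n-1` with
`σ_{i-1} < σ_i > σ_{i+1}`. -/
def intPeakCount (n : ℕ) (σ : Equiv.Perm (Fin n)) : ℕ :=
  ((Finset.Icc 2 (n - 1)).filter fun i =>
    permEntry n σ (i - 1) < permEntry n σ i ∧ permEntry n σ (i + 1) < permEntry n σ i).card

/-- The number of up-down runs of `σ`: maximal monotone segments of the
extended sequence `0, σ₁, …, σₙ`, i.e. one more than the number of direction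
changes of that sequence (and `0` for `n = 0`). -/
def udRunCount (n : ℕ) (σ : Equiv.Perm (Fin n)) : ℕ :=
  if n = 0 then 0 else
    1 + ((Finset.Icc 1 (n - 1)).filter fun i =>
      (permEntry n σ (i - 1) < permEntry n σ i ∧ permEntry n σ (i + 1) < permEntry n σ i) ∨
      (permEntry n σ i < permEntry n σ (i - 1) ∧ permEntry n σ i < permEntry n σ (i + 1))).card

/-- The number of alternating runs of `σ`: maximal monotone segments of
`σ₁, …, σₙ`, i.e. one more than the number of direction changes (and `0` for `n = 0`). -/
def altRunCount (n : ℕ) (σ : Equiv.Perm (Fin n)) : ℕ :=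
  if n = 0 then 0 else
    1 + ((Finset.Icc 2 (n - 1)).filter fun i =>
      (permEntry n σ (i - 1) < permEntry n σ i ∧ permEntry n σ (i + 1) < permEntry n σ i) ∨
      (permEntry n σ i < permEntry n σ (i - 1) ∧ permEntry n σ i < permEntry n σ (i + 1))).card

/-- `L n k` : the number of permutations of `[n]` with exactly `k` left peaks. -/
def leftPeakNum (n k : ℕ) : ℕ :=
  (Finset.univ.filter fun σ : Equiv.Perm (Fin n) => leftPeakCount n σ = k).card

/-- `W n k` : the number of permutations of `[n]` with exactly `k` exterior peaks. -/
def extPeakNum (n k : ℕ) : ℕ :=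
  (Finset.univ.filter fun σ : Equiv.Perm (Fin n) => extPeakCount n σ = k).card

/-- `M n k` : the number of permutations of `[n]` with exactly `k` interior peaks. -/
def intPeakNum (n k : ℕ) : ℕ :=
  (Finset.univ.filter fun σ : Equiv.Perm (Fin n) => intPeakCount n σ = k).card

/-- `Λ n k` : the number of permutations of `[n]` with exactly `k` up-down runs. -/
def udRunNum (n k : ℕ) : ℕ :=
  (Finset.univ.filter fun σ : Equiv.Perm (Fin n) => udRunCount n σ = k).card

/-- `R n k` : the number of permutations of `[n]` with exactly `k` alternating runs. -/
def altRunNum (n k : ℕ) : ℕ :=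
  (Finset.univ.filter fun σ : Equiv.Perm (Fin n) => altRunCount n σ = k).card

/-- The bivariate exterior peak polynomial
`W_n(x,y) = Σ_{k=1}^{⌊(n+1)/2⌋} W(n,k)·x^{2k}·y^{n−2k+1}`, with `W_0(x,y) = y`. -/
noncomputable def Wb (n : ℕ) : MvPolynomial (Fin 2) ℚ :=
  if n = 0 then X 1 else
    ∑ k ∈ Finset.Icc 1 ((n + 1) / 2),
      (extPeakNum n k : MvPolynomial (Fin 2) ℚ) * X 0 ^ (2 * k) * X 1 ^ (n + 1 - 2 * k)

open Finset

theorem Derivation.iterate_map_mul_antidiagonal {R A : Type*} [CommSemiring R] [CommSemiring A]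
    [Algebra R A] (D : Derivation R A A) (n : ℕ) (a b : A) :
    D^[n] (a * b) = ∑ ij ∈ antidiagonal n, n.choose ij.1 • (D^[ij.1] a * D^[ij.2] b) := by
  induction n with
  | zero => simp
  | succ n ih =>
    rw [sum_antidiagonal_choose_succ_nsmul (M := A) (fun i j => D^[i] a * D^[j] b) n]
    simp only [Function.iterate_succ_apply', ih, map_sum, map_nsmul, Derivation.leibniz,
      smul_eq_mul, smul_add, sum_add_distrib]
    refine congrArg _ (sum_congr rfl fun ij hij ↦ ?_)
    rw [n.choose_symm_of_eq_add (mem_antidiagonal.1 hij).symm, mul_comm]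

theorem Derivation.iterate_map_mul {R A : Type*} [CommSemiring R] [CommSemiring A]
    [Algebra R A] (D : Derivation R A A) (n : ℕ) (a b : A) :
    D^[n] (a * b) = ∑ i ∈ range (n + 1), n.choose i • (D^[i] a * D^[n - i] b) := by
  rw [D.iterate_map_mul_antidiagonal n a b]
  exact Nat.sum_antidiagonal_eq_sum_range_succ (fun i j ↦ n.choose i • (D^[i] a * D^[j] b)) n

/-- The permutation `σ₁ ⋯ σ_p (n+1) σ_{p+1} ⋯ σₙ` of `[n + 1]`. -/
def insertMax (n : ℕ) (σ : Equiv.Perm (Fin n)) (p : Fin (n + 1)) : Equiv.Perm (Fin (n + 1)) :=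
  (finSuccEquiv' p).trans ((Equiv.optionCongr σ).trans (finSuccEquiv' (Fin.last n)).symm)

section insertMax

variable {n : ℕ} (σ : Equiv.Perm (Fin n)) (p : Fin (n + 1))

lemma insertMax_apply_self : insertMax n σ p p = Fin.last n := by
  simp [insertMax, finSuccEquiv'_at]

lemma insertMax_apply_succAbove (j : Fin n) :
    insertMax n σ p (p.succAbove j) = (σ j).castSucc := by
  simp [insertMax, finSuccEquiv'_succAbove,
    finSuccEquiv'_symm_some_below (Fin.castSucc_lt_last _)]

variable (n) in
lemma insertMax_bijective :
    Function.Bijective fun x : Equiv.Perm (Fin n) × Fin (n + 1) ↦ insertMax n x.1 x.2 := by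
  rw [Fintype.bijective_iff_injective_and_card]
  refine ⟨?_, by simp [Fintype.card_perm, Nat.factorial_succ, mul_comm]⟩
  rintro ⟨σ, p⟩ ⟨σ', p'⟩ h
  obtain rfl : p = p' := (insertMax n σ' p').injective <| by
    simp only at h
    rw [insertMax_apply_self, ← h, insertMax_apply_self]
  obtain rfl : σ = σ' := Equiv.ext fun j ↦ Fin.castSucc_inj.mp <| by
    rw [← insertMax_apply_succAbove, ← insertMax_apply_succAbove]
    exact congrFun (congrArg DFunLike.coe h) _
  rfl

lemma permEntry_insertMax_of_lt {i : ℕ} (hi : i < p + 1) :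
    permEntry (n + 1) (insertMax n σ p) i = permEntry n σ i := by
  rcases Nat.eq_zero_or_pos i with rfl | hi0
  · simp [permEntry]
  have hpos : (⟨i - 1, by omega⟩ : Fin (n + 1)) = p.succAbove ⟨i - 1, by omega⟩ := by
    rw [Fin.succAbove_of_castSucc_lt _ _ (by simp [Fin.lt_def]; omega)]; rfl
  rw [permEntry, dif_pos (by omega), hpos, insertMax_apply_succAbove, permEntry,
    dif_pos (by omega), Fin.val_castSucc]

lemma permEntry_insertMax_self : permEntry (n + 1) (insertMax n σ p) (p + 1) = n + 1 := by
  rw [permEntry, dif_pos (by omega)]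
  simp [insertMax_apply_self]

lemma permEntry_insertMax_of_gt {i : ℕ} (hi : p + 1 < i) :
    permEntry (n + 1) (insertMax n σ p) i = permEntry n σ (i - 1) := by
  by_cases hin : i ≤ n + 1
  · have hpos : (⟨i - 1, by omega⟩ : Fin (n + 1)) = p.succAbove ⟨i - 2, by omega⟩ := by
      rw [Fin.succAbove_of_le_castSucc _ _ (by simp [Fin.le_def]; omega)]
      ext; simp; omega
    rw [permEntry, dif_pos (by omega), hpos, insertMax_apply_succAbove, permEntry,
      dif_pos (by omega), Fin.val_castSucc]
    rfl
  · rw [permEntry, dif_neg (by omega), permEntry, dif_neg (by omega)]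

end insertMax

def peakSet (n : ℕ) (σ : Equiv.Perm (Fin n)) : Finset ℕ :=
  (Icc 1 n).filter fun i =>
    permEntry n σ (i - 1) < permEntry n σ i ∧ permEntry n σ (i + 1) < permEntry n σ i

/-- The slots where inserting `n + 1` destroys a peak of `σ` instead of creating one. -/
def peakSlots (n : ℕ) (σ : Equiv.Perm (Fin n)) : Finset (Fin (n + 1)) :=
  univ.filter fun p ↦ (p : ℕ) ∈ peakSet n σ ∨ (p : ℕ) + 1 ∈ peakSet n σ

section peaks

variable {n : ℕ} (σ : Equiv.Perm (Fin n))

lemma extPeakCount_eq_card_peakSet : extPeakCount n σ = #(peakSet n σ) := rfl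

lemma permEntry_le (i : ℕ) : permEntry n σ i ≤ n := by
  unfold permEntry
  split
  · exact (σ _).isLt
  · omega

lemma peakSet_subset_Icc : peakSet n σ ⊆ Icc 1 n := filter_subset _ _

lemma succ_notMem_peakSet {i : ℕ} (h : i ∈ peakSet n σ) : i + 1 ∉ peakSet n σ := by
  simp only [peakSet, mem_filter, Nat.add_sub_cancel] at h ⊢
  omega

lemma peakSet_insertMax (p : Fin (n + 1)) :
    peakSet (n + 1) (insertMax n σ p) = insert ((p : ℕ) + 1)
      ((peakSet n σ).filter (· < (p : ℕ)) ∪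
        ((peakSet n σ).filter ((p : ℕ) + 1 < ·)).map (addRightEmbedding 1)) := by
  have hE := permEntry_le σ
  have hlt := @permEntry_insertMax_of_lt _ σ p
  have hself := permEntry_insertMax_self σ p
  have hgt := @permEntry_insertMax_of_gt _ σ p
  have hp := p.isLt
  ext i
  simp only [peakSet, mem_insert, mem_union, mem_filter, mem_map, mem_Icc,
    addRightEmbedding_apply]
  -- the new maximum at position `p + 1` is a peak and kills the neighbouring positions `p`, `p + 2`
  rcases (by omega : i < p ∨ i = p ∨ i = p + 1 ∨ i = p + 2 ∨ p + 2 < i) with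
    h | rfl | rfl | rfl | h
  · simp (disch := omega) only [hlt]
    constructor
    · rintro ⟨⟨h1, -⟩, hL, hR⟩
      exact Or.inr (Or.inl ⟨⟨⟨h1, by omega⟩, hL, hR⟩, h⟩)
    · rintro (h' | ⟨⟨⟨h1, -⟩, hL, hR⟩, -⟩ | ⟨a, ⟨-, h'⟩, rfl⟩)
      · omega
      · exact ⟨⟨h1, by omega⟩, hL, hR⟩
      · omega
  · refine iff_of_false (fun ⟨_, _, hR⟩ ↦ ?_) ?_
    · simp (disch := omega) only [hself, hlt] at hR
      exact absurd (hE p) (by omega)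
    · rintro (h' | ⟨-, h'⟩ | ⟨a, ⟨-, h'⟩, ha⟩) <;> omega
  · refine iff_of_true ?_ (Or.inl rfl)
    simp (disch := omega) only [hself, Nat.add_sub_cancel, hlt, hgt]
    have := hE p
    have := hE (p + 1)
    omega
  · refine iff_of_false (fun ⟨_, hL, _⟩ ↦ ?_) ?_
    · simp (disch := omega) only [show (p : ℕ) + 2 - 1 = p + 1 by omega, hself, hgt] at hL
      exact absurd (hE (p + 1)) (by omega)
    · rintro (h' | ⟨-, h'⟩ | ⟨a, ⟨-, h'⟩, ha⟩) <;> omega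
  · simp (disch := omega) only [hgt, Nat.add_sub_cancel]
    constructor
    · rintro ⟨⟨-, h2⟩, hL, hR⟩
      refine Or.inr (Or.inr ⟨i - 1, ⟨⟨⟨by omega, by omega⟩, hL, ?_⟩, by omega⟩, by omega⟩)
      rwa [Nat.sub_add_cancel (by omega)]
    · rintro (h' | ⟨-, h'⟩ | ⟨a, ⟨⟨⟨-, h2⟩, hL, hR⟩, -⟩, rfl⟩)
      · omega
      · omega
      · exact ⟨⟨by omega, by omega⟩, hL, hR⟩

end peaks

section counting

variable {n : ℕ} (σ : Equiv.Perm (Fin n))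

lemma extPeakCount_insertMax (p : Fin (n + 1)) :
    extPeakCount (n + 1) (insertMax n σ p) =
      if p ∈ peakSlots n σ then extPeakCount n σ else extPeakCount n σ + 1 := by
  set P := peakSet n σ
  have hsplit : #P = #(P.filter (· < (p : ℕ))) + #(P.filter ((p : ℕ) + 1 < ·)) +
      ((if (p : ℕ) ∈ P then 1 else 0) + if (p : ℕ) + 1 ∈ P then 1 else 0) := by
    rw [card_filter, card_filter, ← sum_ite_eq' P (p : ℕ) (fun _ ↦ 1),
      ← sum_ite_eq' P ((p : ℕ) + 1) (fun _ ↦ 1), card_eq_sum_ones, ← sum_add_distrib,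
      ← sum_add_distrib, ← sum_add_distrib]
    exact sum_congr rfl fun j _ ↦ by split_ifs <;> omega
  have hdisj : Disjoint (P.filter (· < (p : ℕ)))
      ((P.filter ((p : ℕ) + 1 < ·)).map (addRightEmbedding 1)) := by
    simp only [disjoint_left, mem_filter, mem_map, addRightEmbedding_apply]
    omega
  have hnew : (p : ℕ) + 1 ∉ P.filter (· < (p : ℕ)) ∪
      (P.filter ((p : ℕ) + 1 < ·)).map (addRightEmbedding 1) := by
    simp only [mem_union, mem_filter, mem_map, addRightEmbedding_apply]
    omega
  rw [extPeakCount_eq_card_peakSet, extPeakCount_eq_card_peakSet, peakSet_insertMax,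
    card_insert_of_notMem hnew, card_union_of_disjoint hdisj, card_map, hsplit]
  have : (p : ℕ) ∈ P → (p : ℕ) + 1 ∉ P := succ_notMem_peakSet σ
  simp only [peakSlots, mem_filter, mem_univ, true_and]
  split_ifs <;> tauto

lemma sum_range_indicator_peakSet {m : ℕ} (hm : n < m) :
    ∑ j ∈ range m, (if j ∈ peakSet n σ then 1 else 0) = extPeakCount n σ := by
  rw [sum_boole, Nat.cast_id, filter_mem_eq_inter, inter_eq_right.mpr,
    extPeakCount_eq_card_peakSet]
  exact (peakSet_subset_Icc σ).trans fun j hj ↦ by simp at hj ⊢; omega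

lemma card_peakSlots : #(peakSlots n σ) = 2 * extPeakCount n σ := by
  set P := peakSet n σ
  have h0 : 0 ∉ P := fun h ↦ by simpa using peakSet_subset_Icc σ h
  calc #(peakSlots n σ)
      = ∑ p ∈ range (n + 1), ((if p ∈ P then 1 else 0) + if p + 1 ∈ P then 1 else 0) := by
        rw [peakSlots, card_filter, ← Fin.sum_univ_eq_sum_range
          (fun p ↦ (if p ∈ P then 1 else 0) + if p + 1 ∈ P then 1 else 0)]
        refine sum_congr rfl fun p _ ↦ ?_
        have : (p : ℕ) ∈ P → (p : ℕ) + 1 ∉ P := succ_notMem_peakSet σ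
        split_ifs <;> tauto
    _ = ∑ j ∈ range (n + 1), (if j ∈ P then 1 else 0) +
          ∑ j ∈ range (n + 2), (if j ∈ P then 1 else 0) := by
        rw [sum_add_distrib, sum_range_succ' _ (n + 1), if_neg h0, add_zero]
    _ = 2 * extPeakCount n σ := by
        rw [sum_range_indicator_peakSet σ (by omega), sum_range_indicator_peakSet σ (by omega)]
        ring

lemma two_mul_extPeakCount_le : 2 * extPeakCount n σ ≤ n + 1 := by
  rw [← card_peakSlots]
  simpa using card_le_univ (peakSlots n σ)

lemma extPeakCount_pos (τ : Equiv.Perm (Fin (n + 1))) : 0 < extPeakCount (n + 1) τ := by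
  obtain ⟨⟨σ, p⟩, rfl⟩ := (insertMax_bijective n).2 τ
  rw [extPeakCount_eq_card_peakSet, peakSet_insertMax]
  exact card_pos.mpr ⟨_, mem_insert_self _ _⟩

end counting

noncomputable def peakDerivation :
    Derivation ℚ (MvPolynomial (Fin 2) ℚ) (MvPolynomial (Fin 2) ℚ) :=
  mkDerivation ℚ ![X 0 * X 1, X 0 ^ 2]

noncomputable def peakMonomial (n c : ℕ) : MvPolynomial (Fin 2) ℚ :=
  X 0 ^ (2 * c) * X 1 ^ (n + 1 - 2 * c)

lemma peakDerivation_X_zero : peakDerivation (X 0) = X 0 * X 1 := by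
  simp [peakDerivation, mkDerivation_X]

lemma peakDerivation_X_one : peakDerivation (X 1) = X 0 ^ 2 := by
  simp [peakDerivation, mkDerivation_X]

lemma peakDerivation_X_pow_mul_X_pow (a b : ℕ) :
    peakDerivation (X 0 ^ a * X 1 ^ b) =
      (a : MvPolynomial (Fin 2) ℚ) * (X 0 ^ a * X 1 ^ (b + 1)) +
        (b : MvPolynomial (Fin 2) ℚ) * (X 0 ^ (a + 2) * X 1 ^ (b - 1)) := by
  have hx : peakDerivation (X 0 ^ a) = (a : MvPolynomial (Fin 2) ℚ) * X 0 ^ a * X 1 := by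
    rcases a with _ | a
    · simp
    · rw [Derivation.leibniz_pow, peakDerivation_X_zero, nsmul_eq_mul, smul_eq_mul,
        Nat.add_sub_cancel]
      ring
  rw [Derivation.leibniz, Derivation.leibniz_pow, hx, peakDerivation_X_one, smul_eq_mul,
    smul_eq_mul, nsmul_eq_mul, smul_eq_mul]
  ring

lemma peakDerivation_X_sq : peakDerivation (X 0 ^ 2) = peakDerivation (X 1 ^ 2) := by
  rw [Derivation.leibniz_pow, Derivation.leibniz_pow, peakDerivation_X_zero, peakDerivation_X_one]
  simp only [smul_eq_mul, nsmul_eq_mul]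
  ring

lemma peakDerivation_peakMonomial {n c : ℕ} (hc : 2 * c ≤ n + 1) :
    peakDerivation (peakMonomial n c) =
      ((2 * c : ℕ) : MvPolynomial (Fin 2) ℚ) * peakMonomial (n + 1) c +
        ((n + 1 - 2 * c : ℕ) : MvPolynomial (Fin 2) ℚ) * peakMonomial (n + 1) (c + 1) := by
  rw [peakMonomial, peakDerivation_X_pow_mul_X_pow, peakMonomial, peakMonomial,
    show n + 1 - 2 * c + 1 = n + 1 + 1 - 2 * c by omega,
    show n + 1 - 2 * c - 1 = n + 1 + 1 - 2 * (c + 1) by omega, mul_add_one 2 c]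

lemma sum_peakMonomial_insertMax {n : ℕ} (σ : Equiv.Perm (Fin n)) :
    ∑ p, peakMonomial (n + 1) (extPeakCount (n + 1) (insertMax n σ p)) =
      peakDerivation (peakMonomial n (extPeakCount n σ)) := by
  have hcompl : #(univ \ peakSlots n σ) = n + 1 - 2 * extPeakCount n σ := by
    rw [card_univ_sdiff, Fintype.card_fin, card_peakSlots]
  simp only [extPeakCount_insertMax, apply_ite, sum_ite, sum_const, nsmul_eq_mul,
    filter_mem_eq_inter, univ_inter, filter_notMem_eq_sdiff, hcompl, card_peakSlots]
  rw [peakDerivation_peakMonomial (two_mul_extPeakCount_le σ)]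

lemma Wb_eq_sum_peakMonomial (n : ℕ) :
    Wb n = ∑ σ : Equiv.Perm (Fin n), peakMonomial n (extPeakCount n σ) := by
  rcases n with _ | n
  · simp [Wb, peakMonomial, extPeakCount]
  rw [Wb, if_neg n.succ_ne_zero,
    ← sum_fiberwise_of_maps_to (g := extPeakCount (n + 1)) (t := Icc 1 ((n + 1 + 1) / 2))]
  · refine sum_congr rfl fun k _ ↦ ?_
    rw [sum_congr rfl fun σ hσ ↦ by rw [(mem_filter.1 hσ).2], sum_const, nsmul_eq_mul,
      peakMonomial, extPeakNum, mul_assoc]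
  · intro τ _
    have := extPeakCount_pos τ
    have := two_mul_extPeakCount_le τ
    simp only [mem_Icc]
    omega

lemma Wb_succ (n : ℕ) : Wb (n + 1) = peakDerivation (Wb n) := by
  rw [Wb_eq_sum_peakMonomial, Wb_eq_sum_peakMonomial, map_sum,
    ← (insertMax_bijective n).sum_comp, Fintype.sum_prod_type]
  exact sum_congr rfl fun σ _ ↦ sum_peakMonomial_insertMax σ

lemma Wb_eq_iterate (n : ℕ) : Wb n = peakDerivation^[n] (X 1) := by
  induction n with
  | zero => simp [Wb]
  | succ n ih => rw [Wb_succ, ih, Function.iterate_succ_apply']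

/-- `W_{n+1}(x,y) = Σ_{k=0}^{n} C(n,k)·W_k(x,y)·W_{n−k}(x,y)` for `n ≥ 1`. -/
theorem stmt_5 (n : ℕ) (hn : 1 ≤ n) :
    Wb (n + 1) = ∑ k ∈ Finset.range (n + 1),
      (n.choose k : MvPolynomial (Fin 2) ℚ) * Wb k * Wb (n - k) := by
  obtain ⟨m, rfl⟩ := Nat.exists_eq_add_of_le' hn
  have hsq : Wb (m + 1 + 1) = peakDerivation^[m + 1] (X 1 * X 1) :=
    calc Wb (m + 1 + 1) = peakDerivation^[m] (peakDerivation (X 0 ^ 2)) := by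
          rw [Wb_eq_iterate, Function.iterate_succ_apply, peakDerivation_X_one,
            Function.iterate_succ_apply]
      _ = peakDerivation^[m + 1] (X 1 * X 1) := by
          rw [peakDerivation_X_sq, ← sq, Function.iterate_succ_apply]
  rw [hsq, Derivation.iterate_map_mul]
  simp only [Wb_eq_iterate, nsmul_eq_mul, mul_assoc]
end

section
/- For every n ≥ 1, the bivariate peak polynomials satisfy the convolution formula W_{n+1}(x,y) = Σ_{k=0}^{n} C(n,k)·L_k(x,y)·L_{n−k}(x,y), where C(n,k) is the binomial coefficient. -/
open MvPolynomial

/-- The bivariate left peak polynomial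
`L_n(x,y) = Σ_{k=0}^{⌊n/2⌋} L(n,k)·x^{2k+1}·y^{n−2k}`. -/
noncomputable def Lb (n : ℕ) : MvPolynomial (Fin 2) ℚ :=
  ∑ k ∈ Finset.range (n / 2 + 1),
    (leftPeakNum n k : MvPolynomial (Fin 2) ℚ) * X 0 ^ (2 * k + 1) * X 1 ^ (n - 2 * k)


/-! Cut a permutation `σ` of `[n+1]` at its largest entry `n+1`, say at position `k+1`. The
letters to its left form a word on a `k`-subset `S` of `[n]`, those to its right, read backwards,
a word on `Sᶜ`; relabelling them increasingly gives permutations `α ∈ 𝔖_k` and `β ∈ 𝔖_{n-k}`, and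
`σ ↦ (S, α, β)` is a bijection. The entry `n+1` is an exterior peak and its neighbours are not,
while the other exterior peaks are the left peaks of `α` and of `β`: the conventions
`σ₀ = σ_{n+2} = 0` become the convention `σ₀ = 0` of the two halves. So the number of exterior
peaks of `σ` is one more than the total number of left peaks of `α` and `β`, and the monomial of `σ`
in `W_{n+1}` is the product of the monomial of `α` in `L_k` and that of `β` in `L_{n-k}`. -/

open Finset Equiv

/-- `leftPeakCount n σ` and `extPeakCount n σ` are, by definition, the cardinalities of
`peaks (permEntry n σ) (Icc 1 (n - 1))` and `peaks (permEntry n σ) (Icc 1 n)`. -/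
def peaks (f : ℕ → ℕ) (s : Finset ℕ) : Finset ℕ :=
  s.filter fun i => f (i - 1) < f i ∧ f (i + 1) < f i

section Peaks

variable {f g : ℕ → ℕ} {s : Finset ℕ}

lemma peaks_congr (h : ∀ i ∈ s, f (i - 1) = g (i - 1) ∧ f i = g i ∧ f (i + 1) = g (i + 1)) :
    peaks f s = peaks g s :=
  filter_congr fun i hi => by obtain ⟨h₁, h₂, h₃⟩ := h i hi; rw [h₁, h₂, h₃]

lemma peaks_congr_of_lt_iff (h : ∀ i j, f i < f j ↔ g i < g j) : peaks f s = peaks g s :=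
  filter_congr fun i _ => by rw [h, h]

lemma card_peaks_reflect (f : ℕ → ℕ) {a b c : ℕ} (ha : 1 ≤ a) (hbc : b < c) :
    #(peaks (fun i => f (c - i)) (Icc a b)) = #(peaks f (Icc (c - b) (c - a))) := by
  apply card_nbij' (c - ·) (c - ·) <;> intro i hi <;>
    simp only [peaks, coe_filter, mem_Icc, Set.mem_ofPred_eq] at hi ⊢
  · refine ⟨by omega, ?_, ?_⟩
    · rw [show c - i - 1 = c - (i + 1) by omega]; exact hi.2.2
    · rw [show c - i + 1 = c - (i - 1) by omega]; exact hi.2.1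
  · refine ⟨by omega, ?_, ?_⟩
    · rw [show c - (c - i - 1) = i + 1 by omega, show c - (c - i) = i by omega]; exact hi.2.2
    · rw [show c - (c - i + 1) = i - 1 by omega, show c - (c - i) = i by omega]; exact hi.2.1
  · omega
  · omega

lemma card_peaks_Icc_of_forall_lt {p a b : ℕ} (hp : ∀ i ≠ p, f i < f p) (hp₀ : p ≠ 0)
    (ha : a ≤ p) (hb : p ≤ b) :
    #(peaks f (Icc a b)) = #(peaks f (Icc a (p - 2))) + 1 + #(peaks f (Icc (p + 2) b)) := by
  have hsplit : peaks f (Icc a b) = (peaks f (Icc a (p - 2)) ∪ {p}) ∪ peaks f (Icc (p + 2) b) := by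
    ext i
    simp only [peaks, mem_union, mem_filter, mem_Icc, mem_singleton]
    constructor
    · rintro ⟨hi, hl, hr⟩
      have hl' : i - 1 ≠ p := fun h => (hp i (by omega)).not_gt (h ▸ hl)
      have hr' : i + 1 ≠ p := fun h => (hp i (by omega)).not_gt (h ▸ hr)
      by_cases hip : i = p
      · exact Or.inl (Or.inr hip)
      by_cases hlow : i ≤ p - 2
      · exact Or.inl (Or.inl ⟨⟨hi.1, hlow⟩, hl, hr⟩)
      · exact Or.inr ⟨⟨by omega, hi.2⟩, hl, hr⟩
    · rintro ((⟨hi, hpk⟩ | rfl) | ⟨hi, hpk⟩)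
      · exact ⟨by omega, hpk⟩
      · exact ⟨⟨ha, hb⟩, hp _ (by omega), hp _ (by omega)⟩
      · exact ⟨by omega, hpk⟩
  have hdisj₁ : Disjoint (peaks f (Icc a (p - 2))) {p} := by
    simp only [disjoint_singleton_right, peaks, mem_filter, mem_Icc]; omega
  have hdisj₂ : Disjoint (peaks f (Icc a (p - 2)) ∪ {p}) (peaks f (Icc (p + 2) b)) := by
    simp only [disjoint_left, peaks, mem_union, mem_filter, mem_Icc, mem_singleton]; omega
  rw [hsplit, card_union_of_disjoint hdisj₂, card_union_of_disjoint hdisj₁, card_singleton]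

lemma two_mul_card_peaks_Icc_le (f : ℕ → ℕ) (m : ℕ) : 2 * #(peaks f (Icc 1 m)) ≤ m + 1 := by
  -- two peaks are never adjacent, so `i ↦ ⌈i / 2⌉` is injective on them
  have : #(peaks f (Icc 1 m)) ≤ #(Icc 1 ((m + 1) / 2)) := by
    refine card_le_card_of_injOn (fun i => (i + 1) / 2) (fun i hi => ?_) fun i hi j hj hij => ?_
    · simp only [peaks, coe_filter, mem_Icc, Set.mem_ofPred_eq] at hi
      simp only [coe_Icc, Set.mem_Icc]; omega
    · simp only [peaks, coe_filter, mem_Icc, Set.mem_ofPred_eq] at hi hj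
      simp only at hij
      rcases lt_trichotomy i j with h | h | h
      · obtain rfl : j = i + 1 := by omega
        simp only [Nat.add_sub_cancel] at hj; omega
      · exact h
      · obtain rfl : i = j + 1 := by omega
        simp only [Nat.add_sub_cancel] at hi; omega
  rw [Nat.card_Icc] at this
  omega

end Peaks

/-- `permEntry` for words: `permEntry n σ = entrySeq σ` holds by definition. -/
def entrySeq {k m : ℕ} (u : Fin k → Fin m) (i : ℕ) : ℕ :=
  if h : 1 ≤ i ∧ i ≤ k then (u ⟨i - 1, by omega⟩ : ℕ) + 1 else 0

lemma entrySeq_comp_lt_iff {k m m' : ℕ} {φ : Fin m → Fin m'} (hφ : StrictMono φ)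
    (u : Fin k → Fin m) (i j : ℕ) :
    entrySeq (φ ∘ u) i < entrySeq (φ ∘ u) j ↔ entrySeq u i < entrySeq u j := by
  unfold entrySeq
  split_ifs <;> simp [hφ.lt_iff_lt]

lemma peaks_entrySeq_comp {k m m' : ℕ} {φ : Fin m → Fin m'} (hφ : StrictMono φ)
    (u : Fin k → Fin m) (s : Finset ℕ) : peaks (entrySeq (φ ∘ u)) s = peaks (entrySeq u) s :=
  peaks_congr_of_lt_iff (entrySeq_comp_lt_iff hφ u)

lemma two_mul_leftPeakCount_le {n : ℕ} (σ : Perm (Fin n)) : 2 * leftPeakCount n σ ≤ n := by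
  have := two_mul_card_peaks_Icc_le (permEntry n σ) (n - 1)
  change 2 * #(peaks _ _) ≤ n
  omega

section Max

variable {n : ℕ} {σ : Perm (Fin (n + 1))} {p : Fin (n + 1)}

lemma permEntry_lt_of_apply_eq_last (hσ : σ p = Fin.last n) {i : ℕ} (hi : i ≠ p + 1) :
    permEntry (n + 1) σ i < permEntry (n + 1) σ (p + 1) := by
  have hp : permEntry (n + 1) σ (p + 1) = n + 1 := by
    rw [permEntry, dif_pos ⟨by omega, by omega⟩]
    simp [hσ]
  rw [hp, permEntry]
  split_ifs with h
  · have hne : σ ⟨i - 1, by omega⟩ ≠ Fin.last n := fun h' =>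
      hi (by have := congrArg Fin.val (σ.injective (h'.trans hσ.symm)); simp at this; omega)
    have := Fin.val_lt_last hne
    omega
  · omega

lemma extPeakCount_eq_of_apply_eq_last (hσ : σ p = Fin.last n) :
    extPeakCount (n + 1) σ = #(peaks (permEntry (n + 1) σ) (Icc 1 (p - 1))) + 1
      + #(peaks (permEntry (n + 1) σ) (Icc (p + 3) (n + 1))) := by
  have := card_peaks_Icc_of_forall_lt (f := permEntry (n + 1) σ) (p := p + 1) (a := 1)
    (b := n + 1) (fun i hi => permEntry_lt_of_apply_eq_last hσ hi) (by omega) (by omega)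
    (by omega)
  rwa [show (p : ℕ) + 1 - 2 = p - 1 by omega] at this

end Max

noncomputable def Finset.relabel {α : Type*} [LinearOrder α] {k : ℕ} (S : Finset α)
    (hS : #S = k) (u : Fin k → α) (hu : Function.Injective u) (hmem : ∀ j, u j ∈ S) :
    Perm (Fin k) :=
  Equiv.ofBijective (fun j => (S.orderIsoOfFin hS).symm ⟨u j, hmem j⟩) <|
    Finite.injective_iff_bijective.mp fun _ _ h => hu <| by simpa using h

lemma Finset.orderEmbOfFin_relabel {α : Type*} [LinearOrder α] {k : ℕ} (S : Finset α)
    (hS : #S = k) (u : Fin k → α) (hu : Function.Injective u) (hmem : ∀ j, u j ∈ S) (j : Fin k) :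
    S.orderEmbOfFin hS (S.relabel hS u hu hmem j) = u j := by
  simp [Finset.relabel, ← Finset.coe_orderIsoOfFin_apply]

section Join

variable {n k : ℕ} {S : Finset (Fin n)} (hS : #S = k)

include hS in
lemma card_compl_eq_sub : #Sᶜ = n - k := by rw [card_compl, hS, Fintype.card_fin]

include hS in
lemma le_of_card_eq : k ≤ n := hS ▸ (card_le_univ S).trans_eq (Fintype.card_fin n)

variable (α : Perm (Fin k)) (β : Perm (Fin (n - k)))

def joinAtMaxFun (j : Fin (n + 1)) : Fin (n + 1) :=
  if h : (j : ℕ) < k then (S.orderEmbOfFin hS (α ⟨j, h⟩)).castSucc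
  else if h' : (j : ℕ) = k then Fin.last n
  else (Sᶜ.orderEmbOfFin (card_compl_eq_sub hS) (β ⟨n - j, by have := j.isLt; omega⟩)).castSucc

lemma joinAtMaxFun_injective : Function.Injective (joinAtMaxFun hS α β) := by
  have hdisj : ∀ a b, S.orderEmbOfFin hS a ≠ Sᶜ.orderEmbOfFin (card_compl_eq_sub hS) b :=
    fun a b h => mem_compl.mp (Sᶜ.orderEmbOfFin_mem _ b) (h ▸ S.orderEmbOfFin_mem hS a)
  intro j₁ j₂ h
  unfold joinAtMaxFun at h
  split_ifs at h <;>
    simp only [Fin.castSucc_inj, Fin.castSucc_ne_last, (Fin.castSucc_ne_last _).symm,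
      EmbeddingLike.apply_eq_iff_eq, Fin.mk.injEq] at h
  all_goals first
    | exact Fin.ext (by omega)
    | exact absurd h (hdisj _ _)
    | exact absurd h.symm (hdisj _ _)

/-- The permutation `α₁ ⋯ α_k (n+1) β_{n-k} ⋯ β₁` of `[n+1]`, where the letters of `α` are
relabelled increasingly by the elements of `S` and those of `β` by the elements of `Sᶜ`. -/
noncomputable def joinAtMax : Perm (Fin (n + 1)) :=
  Equiv.ofBijective _ (Finite.injective_iff_bijective.mp (joinAtMaxFun_injective hS α β))

lemma joinAtMax_apply_of_lt (j : Fin (n + 1)) (h : (j : ℕ) < k) :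
    joinAtMax hS α β j = (S.orderEmbOfFin hS (α ⟨j, h⟩)).castSucc := by
  simp [joinAtMax, joinAtMaxFun, h]

lemma joinAtMax_apply_self :
    joinAtMax hS α β ⟨k, by have := le_of_card_eq hS; omega⟩ = Fin.last n := by
  simp [joinAtMax, joinAtMaxFun]

lemma joinAtMax_apply_of_gt (j : Fin (n + 1)) (h : k < (j : ℕ)) :
    joinAtMax hS α β j
      = (Sᶜ.orderEmbOfFin (card_compl_eq_sub hS) (β ⟨n - j, by omega⟩)).castSucc := by
  simp [joinAtMax, joinAtMaxFun, h.not_gt, h.ne']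

lemma permEntry_joinAtMax_of_le {i : ℕ} (hi : i ≤ k) :
    permEntry (n + 1) (joinAtMax hS α β) i
      = entrySeq ((Fin.castSucc ∘ S.orderEmbOfFin hS) ∘ α) i := by
  have := le_of_card_eq hS
  unfold permEntry entrySeq
  split_ifs
  · simp [joinAtMax_apply_of_lt hS α β ⟨i - 1, by omega⟩ (by simp only; omega)]
  all_goals omega

lemma permEntry_joinAtMax_of_ge {i : ℕ} (hi : k + 2 ≤ i) :
    permEntry (n + 1) (joinAtMax hS α β) i
      = entrySeq ((Fin.castSucc ∘ Sᶜ.orderEmbOfFin (card_compl_eq_sub hS)) ∘ β) (n + 2 - i) := by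
  unfold permEntry entrySeq
  split_ifs
  · rw [joinAtMax_apply_of_gt hS α β _ (by simp; omega)]
    simp only [Function.comp_apply, Fin.val_castSucc]
    congr 4
    simp only [Fin.mk.injEq]
    omega
  all_goals omega

theorem extPeakCount_joinAtMax :
    extPeakCount (n + 1) (joinAtMax hS α β)
      = 1 + leftPeakCount k α + leftPeakCount (n - k) β := by
  have hk := le_of_card_eq hS
  rw [extPeakCount_eq_of_apply_eq_last (joinAtMax_apply_self hS α β)]
  have hleft : peaks (permEntry (n + 1) (joinAtMax hS α β)) (Icc 1 (k - 1))
      = peaks (permEntry k α) (Icc 1 (k - 1)) := by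
    rw [peaks_congr fun i hi => ?_,
      peaks_entrySeq_comp (Fin.strictMono_castSucc.comp (S.orderEmbOfFin hS).strictMono)]
    · rfl
    · simp only [mem_Icc] at hi
      exact ⟨permEntry_joinAtMax_of_le hS α β (by omega),
        permEntry_joinAtMax_of_le hS α β (by omega), permEntry_joinAtMax_of_le hS α β (by omega)⟩
  have hright : #(peaks (permEntry (n + 1) (joinAtMax hS α β)) (Icc (k + 3) (n + 1)))
      = #(peaks (permEntry (n - k) β) (Icc 1 (n - k - 1))) := by
    have hagree : peaks (permEntry (n + 1) (joinAtMax hS α β)) (Icc (k + 3) (n + 1))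
        = peaks (fun i => entrySeq ((Fin.castSucc ∘ Sᶜ.orderEmbOfFin (card_compl_eq_sub hS)) ∘ β)
          (n + 2 - i)) (Icc (k + 3) (n + 1)) :=
      peaks_congr fun i hi => by
        simp only [mem_Icc] at hi
        exact ⟨permEntry_joinAtMax_of_ge hS α β (by omega),
          permEntry_joinAtMax_of_ge hS α β (by omega), permEntry_joinAtMax_of_ge hS α β (by omega)⟩
    rw [hagree, card_peaks_reflect _ (by omega) (by omega),
      peaks_entrySeq_comp (Fin.strictMono_castSucc.comp (Sᶜ.orderEmbOfFin _).strictMono),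
      show n + 2 - (n + 1) = 1 by omega, show n + 2 - (k + 3) = n - k - 1 by omega]
    rfl
  rw [hleft, hright, add_comm _ 1]
  rfl

end Join

section Decompose

variable {n k : ℕ}

lemma joinAtMax_inj {S S' : Finset (Fin n)} (hS : #S = k) (hS' : #S' = k)
    {α α' : Perm (Fin k)} {β β' : Perm (Fin (n - k))}
    (h : joinAtMax hS α β = joinAtMax hS' α' β') : S = S' ∧ α = α' ∧ β = β' := by
  have hk := le_of_card_eq hS
  have hleft (j : Fin k) : S.orderEmbOfFin hS (α j) = S'.orderEmbOfFin hS' (α' j) := by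
    have := DFunLike.congr_fun h ⟨j, by omega⟩
    rwa [joinAtMax_apply_of_lt _ _ _ _ j.isLt, joinAtMax_apply_of_lt _ _ _ _ j.isLt,
      Fin.castSucc_inj] at this
  obtain rfl : S = S' := by
    apply Finset.coe_injective
    have hcomp : ⇑(S.orderEmbOfFin hS) ∘ ⇑α = ⇑(S'.orderEmbOfFin hS') ∘ ⇑α' := funext hleft
    rw [← range_orderEmbOfFin S hS, ← range_orderEmbOfFin S' hS',
      ← EquivLike.range_comp _ α, hcomp, EquivLike.range_comp]
  refine ⟨rfl, Equiv.ext fun j => (S.orderEmbOfFin hS).injective (hleft j),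
    Equiv.ext fun r => ?_⟩
  have := DFunLike.congr_fun h ⟨n - r, by omega⟩
  rw [joinAtMax_apply_of_gt _ _ _ _ (by simp only; omega),
    joinAtMax_apply_of_gt _ _ _ _ (by simp only; omega), Fin.castSucc_inj,
    (Sᶜ.orderEmbOfFin _).injective.eq_iff] at this
  simpa [show n - (n - r) = (r : ℕ) by omega] using this

lemma exists_joinAtMax_eq (σ : Perm (Fin (n + 1))) (hk : k ≤ n)
    (hσ : σ ⟨k, by omega⟩ = Fin.last n) :
    ∃ (S : Finset (Fin n)) (hS : #S = k) (α : Perm (Fin k)) (β : Perm (Fin (n - k))),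
      joinAtMax hS α β = σ := by
  have hne (j : Fin (n + 1)) (hj : (j : ℕ) ≠ k) : σ j ≠ Fin.last n := fun h =>
    hj (congrArg Fin.val (σ.injective (h.trans hσ.symm)))
  let u (j : Fin k) : Fin n := (σ ⟨j, by omega⟩).castPred (hne _ (by simp only; omega))
  let v (r : Fin (n - k)) : Fin n := (σ ⟨n - r, by omega⟩).castPred (hne _ (by simp only; omega))
  have hu : Function.Injective u := fun a b h => by
    simpa [u, Fin.ext_iff] using σ.injective (Fin.castPred_inj.mp h)
  have hv : Function.Injective v := fun a b h => by
    have := congrArg Fin.val (σ.injective (Fin.castPred_inj.mp h))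
    simp only at this
    exact Fin.ext (by omega)
  have hS : #(univ.image u) = k := by
    rw [card_image_of_injective _ hu, card_univ, Fintype.card_fin]
  have hvS (r : Fin (n - k)) : v r ∈ (univ.image u)ᶜ := by
    simp only [mem_compl, mem_image, mem_univ, true_and, not_exists]
    intro j h
    have := congrArg Fin.val (σ.injective (Fin.castPred_inj.mp h))
    simp only at this
    omega
  refine ⟨_, hS, (univ.image u).relabel hS u hu fun j => mem_image_of_mem u (mem_univ j),
    (univ.image u)ᶜ.relabel (card_compl_eq_sub hS) v hv hvS, Equiv.ext fun j => ?_⟩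
  rcases lt_trichotomy (j : ℕ) k with h | h | h
  · rw [joinAtMax_apply_of_lt _ _ _ _ h, orderEmbOfFin_relabel, Fin.castSucc_castPred]
  · rw [show j = ⟨k, by omega⟩ from Fin.ext h, joinAtMax_apply_self, hσ]
  · rw [joinAtMax_apply_of_gt _ _ _ _ h, orderEmbOfFin_relabel, Fin.castSucc_castPred]
    congr 1
    ext
    simp only
    omega

theorem extPeakCount_mem_Icc (σ : Perm (Fin (n + 1))) :
    extPeakCount (n + 1) σ ∈ Icc 1 ((n + 2) / 2) := by
  have hσ : σ ⟨σ.symm (Fin.last n), (σ.symm _).isLt⟩ = Fin.last n := σ.apply_symm_apply _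
  obtain ⟨S, hS, α, β, h⟩ := exists_joinAtMax_eq σ (Nat.lt_succ_iff.mp (σ.symm _).isLt) hσ
  rw [← h, extPeakCount_joinAtMax, mem_Icc]
  have := two_mul_leftPeakCount_le α
  have := two_mul_leftPeakCount_le β
  have := le_of_card_eq hS
  omega

theorem sum_extPeakCount_filter {M : Type*} [AddCommMonoid M] (F : ℕ → M) (hk : k ≤ n) :
    ∑ σ : Perm (Fin (n + 1)) with (σ.symm (Fin.last n) : ℕ) = k, F (extPeakCount (n + 1) σ)
      = n.choose k • ∑ α : Perm (Fin k), ∑ β : Perm (Fin (n - k)),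
          F (1 + leftPeakCount k α + leftPeakCount (n - k) β) := by
  let D := powersetCard k (univ : Finset (Fin n)) ×ˢ
    (univ : Finset (Perm (Fin k) × Perm (Fin (n - k))))
  have hS (d) (hd : d ∈ D) : #d.1 = k := (mem_powersetCard.mp (mem_product.mp hd).1).2
  symm
  calc
    _ = ∑ d ∈ D, F (1 + leftPeakCount k d.2.1 + leftPeakCount (n - k) d.2.2) := by
      simp only [D, sum_product, sum_const, card_powersetCard, card_univ, Fintype.card_fin,
        Fintype.sum_prod_type]
    _ = _ := by
      refine sum_bij (fun d hd => joinAtMax (hS d hd) d.2.1 d.2.2) (fun d hd => ?_)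
        (fun d₁ hd₁ d₂ hd₂ h => ?_) (fun σ hσ => ?_) (fun d hd => by rw [extPeakCount_joinAtMax])
      · simp only [mem_filter, mem_univ, true_and]
        rw [(Equiv.symm_apply_eq _).mpr (joinAtMax_apply_self (hS d hd) _ _).symm]
      · obtain ⟨h₁, h₂, h₃⟩ := joinAtMax_inj _ _ h
        exact Prod.ext h₁ (Prod.ext h₂ h₃)
      · simp only [mem_filter, mem_univ, true_and] at hσ
        obtain ⟨S, hS, α, β, rfl⟩ :=
          exists_joinAtMax_eq σ hk ((Equiv.symm_apply_eq σ).mp (Fin.ext hσ)).symm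
        exact ⟨(S, α, β), mem_product.mpr ⟨mem_powersetCard.mpr ⟨subset_univ S, hS⟩, mem_univ _⟩,
          rfl⟩

end Decompose

lemma sum_card_filter_mul {ι R : Type*} [Fintype ι] [CommSemiring R] (g : ι → ℕ)
    {t : Finset ℕ} (h : ∀ i, g i ∈ t) (f : ℕ → R) :
    ∑ m ∈ t, (#{i | g i = m} : R) * f m = ∑ i, f (g i) := by
  rw [← sum_fiberwise_of_maps_to' (s := univ) (fun i _ => h i)]
  simp [sum_const, nsmul_eq_mul]

lemma Lb_eq_sum (n : ℕ) :
    Lb n = ∑ σ : Perm (Fin n),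
      X 0 ^ (2 * leftPeakCount n σ + 1) * X 1 ^ (n - 2 * leftPeakCount n σ) := by
  simp only [Lb, leftPeakNum, mul_assoc]
  exact sum_card_filter_mul _
    (fun σ => mem_range.mpr (by have := two_mul_leftPeakCount_le σ; omega)) _

lemma Wb_succ_eq_sum (n : ℕ) :
    Wb (n + 1) = ∑ σ : Perm (Fin (n + 1)),
      X 0 ^ (2 * extPeakCount (n + 1) σ) * X 1 ^ (n + 2 - 2 * extPeakCount (n + 1) σ) := by
  simp only [Wb, Nat.add_one_ne_zero, if_false, extPeakNum, mul_assoc]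
  exact sum_card_filter_mul _ extPeakCount_mem_Icc _

lemma peak_monomial_split {R : Type*} [CommSemiring R] (x y : R) {n k a b : ℕ} (hk : k ≤ n)
    (ha : 2 * a ≤ k) (hb : 2 * b ≤ n - k) :
    x ^ (2 * (1 + a + b)) * y ^ (n + 2 - 2 * (1 + a + b))
      = x ^ (2 * a + 1) * y ^ (k - 2 * a) * (x ^ (2 * b + 1) * y ^ (n - k - 2 * b)) := by
  rw [show n + 2 - 2 * (1 + a + b) = (k - 2 * a) + (n - k - 2 * b) by omega]
  ring

theorem stmt_6_general (n : ℕ) :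
    Wb (n + 1) = ∑ k ∈ Finset.range (n + 1),
      (n.choose k : MvPolynomial (Fin 2) ℚ) * Lb k * Lb (n - k) := by
  rw [Wb_succ_eq_sum, ← sum_fiberwise_of_maps_to (g := fun σ : Perm (Fin (n + 1)) =>
    (σ.symm (Fin.last n) : ℕ)) fun σ _ => mem_range.mpr (σ.symm _).isLt]
  refine sum_congr rfl fun k hkn => ?_
  have hk : k ≤ n := Nat.lt_succ_iff.mp (mem_range.mp hkn)
  rw [sum_extPeakCount_filter (fun m => X 0 ^ (2 * m) * X 1 ^ (n + 2 - 2 * m)) hk, Lb_eq_sum,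
    Lb_eq_sum, mul_assoc, sum_mul_sum, nsmul_eq_mul]
  refine congrArg _ (sum_congr rfl fun α _ => sum_congr rfl fun β _ => ?_)
  exact peak_monomial_split _ _ hk (two_mul_leftPeakCount_le α) (two_mul_leftPeakCount_le β)

/-- `W_{n+1}(x,y) = Σ_{k=0}^{n} C(n,k)·L_k(x,y)·L_{n−k}(x,y)` for `n ≥ 1`. -/
theorem stmt_6 (n : ℕ) (hn : 1 ≤ n) :
    Wb (n + 1) = ∑ k ∈ Finset.range (n + 1),
      (n.choose k : MvPolynomial (Fin 2) ℚ) * Lb k * Lb (n - k) :=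
  stmt_6_general n
end
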